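/- arXiv:2204.07990 — 3 statements merged into one kernel-verified Lean document; each statement's English description precedes it below -/
import Mathlib

section
/- The class of finite Heyting algebras does not have the extension property for partial automorphisms (EPPA): there exist a finite Heyting algebra A and a partial automorphism φ of A (an isomorphism between subalgebras of A) such that no finite Heyting algebra B containing A admits an automorphism extending φ. -/
/-- `S` is (the underlying set of) a Heyting subalgebra of `A`. -/
def IsHeytingSubalg {A : Type*} [HeytingAlgebra A] (S : Set A) : Prop :=
  ⊥ ∈ S ∧ ⊤ ∈ S ∧ ∀ x ∈ S, ∀ y ∈ S, x ⊓ y ∈ S ∧ x ⊔ y ∈ S ∧ x ⇨ y ∈ S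

/-- `φ : S ≃ T` is an isomorphism between the subalgebras `S` and `T` of `A`. -/
def IsPartialHeytingAut {A : Type*} [HeytingAlgebra A] (S T : Set A) (φ : S ≃ T) : Prop :=
  (∀ x y z : S, (z : A) = (x : A) ⊓ (y : A) → ((φ z : A) = (φ x : A) ⊓ (φ y : A))) ∧
  (∀ x y z : S, (z : A) = (x : A) ⊔ (y : A) → ((φ z : A) = (φ x : A) ⊔ (φ y : A))) ∧
  (∀ x y z : S, (z : A) = (x : A) ⇨ (y : A) → ((φ z : A) = (φ x : A) ⇨ (φ y : A))) ∧
  (∀ z : S, (z : A) = ⊥ → (φ z : A) = ⊥) ∧ (∀ z : S, (z : A) = ⊤ → (φ z : A) = ⊤)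

/-- The subalgebra `{0, 1, 3}` of the 4-chain. -/
def Sset : Set (Fin 4) := {x | x ≠ 2}

/-- The subalgebra `{0, 2, 3}` of the 4-chain. -/
def Tset : Set (Fin 4) := {x | x ≠ 1}

lemma mem_ST : ∀ x : Fin 4, x ≠ 2 → Equiv.swap (1:Fin 4) 2 x ≠ 1 := by decide
lemma mem_TS : ∀ x : Fin 4, x ≠ 1 → Equiv.swap (1:Fin 4) 2 x ≠ 2 := by decide

instance : DecidablePred (· ∈ Sset) := fun x => decidable_of_iff (x ≠ 2) Iff.rfl
instance : DecidablePred (· ∈ Tset) := fun x => decidable_of_iff (x ≠ 1) Iff.rfl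

/-- The partial automorphism sending `1 ↦ 2` (restriction of the swap `(1 2)`). -/
def phi : Sset ≃ Tset where
  toFun x := ⟨Equiv.swap (1:Fin 4) 2 x, mem_ST x x.2⟩
  invFun y := ⟨Equiv.swap (1:Fin 4) 2 y, mem_TS y y.2⟩
  left_inv x := Subtype.ext (Equiv.swap_apply_self _ _ _)
  right_inv y := Subtype.ext (Equiv.swap_apply_self _ _ _)

/-- The class of finite Heyting algebras does not have the EPPA: there is a finite
Heyting algebra `A` with a partial automorphism `φ` (an isomorphism between two
subalgebras of `A`) such that no finite Heyting algebra `B` containing `A` admits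
an automorphism extending `φ`. -/
theorem stmt_3 :
    ∃ (A : Type) (_ : HeytingAlgebra A) (_ : Fintype A) (S T : Set A) (φ : S ≃ T),
      IsHeytingSubalg S ∧ IsHeytingSubalg T ∧ IsPartialHeytingAut S T φ ∧
      ∀ (B : Type) (_ : HeytingAlgebra B) (_ : Fintype B) (ι : HeytingHom A B),
        Function.Injective ι →
        ∀ f : HeytingHom B B, Function.Bijective f →
          ¬ ∀ x : S, f (ι (x : A)) = ι ((φ x : A)) := by
  refine ⟨Fin 4, inferInstance, inferInstance, Sset, Tset, phi, ?_, ?_, ?_, ?_⟩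
  · exact ⟨by decide, by decide, by decide⟩
  · exact ⟨by decide, by decide, by decide⟩
  · refine ⟨?_, ?_, ?_, ?_, ?_⟩ <;> decide
  · intro B _ _ ι hι f hf h
    have h1 := h ⟨1, by decide⟩
    have hφ : ((phi ⟨1, by decide⟩ : Tset) : Fin 4) = 2 := by decide
    rw [hφ] at h1
    have hmono : (ι (1 : Fin 4)) < ι (2 : Fin 4) := by
      refine lt_of_le_of_ne (OrderHomClass.mono ι (by decide)) (fun e => ?_)
      exact absurd (hι e) (by decide)
    have fsm : ∀ {u v : B}, u < v → f u < f v := fun {u v} huv =>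
      lt_of_le_of_ne (OrderHomClass.mono f huv.le) (fun e => huv.ne (hf.injective e))
    set x : B := ι (1 : Fin 4) with hx
    have hxlt : x < f x := h1 ▸ hmono
    have chain : ∀ n : ℕ, f^[n] x < f^[n+1] x := by
      intro n
      induction n with
      | zero => simpa using hxlt
      | succ k ih =>
        rw [Function.iterate_succ_apply', Function.iterate_succ_apply']
        exact fsm ih
    have sm : StrictMono (fun n : ℕ => f^[n] x) := strictMono_nat_of_lt_succ chain
    exact absurd sm.injective (not_injective_infinite_finite _)
end

section
/- For every n there exists a finite Heyting algebra generated by a single element having more than n elements; i.e., one-generated finite Heyting algebras are of unbounded size. -/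
/-!
Let `P` be the poset on `{0, …, n-1}` in which `x < y` iff `x + 2 ≤ y`. Its initial segments
`D j = {x | x < j}` are lower sets with `D (j+2) = (D (j+1) ⇨ D j) ⊔ D (j+1)`: an element
`x ≥ j+2` is above `j` and so lies outside `D (j+1) ⇨ D j`, while `x = j+1` lies in it because
everything strictly below it is in `D j`. Hence `D 1` generates the `n + 1` distinct
elements `D 0 = ⊥, D 1, …, D n` of the finite Heyting algebra of lower sets of `P`.
-/

namespace HeytingAlgebra

variable {A : Type*} [HeytingAlgebra A]

inductive InClosure (a : A) : A → Prop
  | self : InClosure a a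
  | bot : InClosure a ⊥
  | top : InClosure a ⊤
  | inf {x y} : InClosure a x → InClosure a y → InClosure a (x ⊓ y)
  | sup {x y} : InClosure a x → InClosure a y → InClosure a (x ⊔ y)
  | himp {x y} : InClosure a x → InClosure a y → InClosure a (x ⇨ y)

def ladder (a : A) : ℕ → A
  | 0 => ⊥
  | 1 => a
  | k + 2 => (ladder a (k + 1) ⇨ ladder a k) ⊔ ladder a (k + 1)

theorem inClosure_ladder (a : A) : ∀ k, InClosure a (ladder a k)
  | 0 => .bot
  | 1 => .self
  | k + 2 => .sup (.himp (inClosure_ladder a (k + 1)) (inClosure_ladder a k))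
      (inClosure_ladder a (k + 1))

def Closure (a : A) : Type _ := {x : A // InClosure a x}

namespace Closure

variable {a : A}

instance : Max (Closure a) := ⟨fun x y => ⟨x.1 ⊔ y.1, .sup x.2 y.2⟩⟩
instance : Min (Closure a) := ⟨fun x y => ⟨x.1 ⊓ y.1, .inf x.2 y.2⟩⟩
instance : Top (Closure a) := ⟨⟨⊤, .top⟩⟩
instance : Bot (Closure a) := ⟨⟨⊥, .bot⟩⟩
instance : HImp (Closure a) := ⟨fun x y => ⟨x.1 ⇨ y.1, .himp x.2 y.2⟩⟩
instance : Compl (Closure a) := ⟨fun x => ⟨x.1 ⇨ ⊥, .himp x.2 .bot⟩⟩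
instance : LE (Closure a) := ⟨fun x y => x.1 ≤ y.1⟩
instance : LT (Closure a) := ⟨fun x y => x.1 < y.1⟩

instance : HeytingAlgebra (Closure a) :=
  Function.Injective.heytingAlgebra Subtype.val Subtype.val_injective Iff.rfl Iff.rfl
    (fun _ _ => rfl) (fun _ _ => rfl) rfl rfl (fun x => himp_bot x.1) (fun _ _ => rfl)

instance [Finite A] : Finite (Closure a) := Subtype.finite

def generator (a : A) : Closure a := ⟨a, .self⟩

theorem eq_univ_of_isHeytingSubalg {S : Set (Closure a)} (hS : IsHeytingSubalg S)
    (ha : generator a ∈ S) : S = Set.univ := by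
  obtain ⟨hbot, htop, hclosed⟩ := hS
  refine Set.eq_univ_of_forall fun ⟨x, hx⟩ => ?_
  induction hx with
  | self => exact ha
  | bot => exact hbot
  | top => exact htop
  | inf _ _ ihx ihy => exact (hclosed _ ihx _ ihy).1
  | sup _ _ ihx ihy => exact (hclosed _ ihx _ ihy).2.1
  | himp _ _ ihx ihy => exact (hclosed _ ihx _ ihy).2.2

theorem le_natCard_of_injOn_ladder [Finite A] {N : ℕ} (h : Set.InjOn (ladder a) (Set.Iio N)) :
    N ≤ Nat.card (Closure a) := by
  have hinj : Function.Injective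
      (fun k => ⟨ladder a k, inClosure_ladder a k⟩ : Fin N → Closure a) :=
    fun j k hjk => Fin.ext (h j.isLt k.isLt (congrArg Subtype.val hjk))
  simpa using Nat.card_le_card_of_injective (β := Closure a) _ hinj

end Closure

end HeytingAlgebra

theorem LowerSet.mem_himp_iff {α : Type*} [Preorder α] {U V : LowerSet α} {x : α} :
    x ∈ U ⇨ V ↔ ∀ ⦃y⦄, y ≤ x → y ∈ U → y ∈ V := by
  rw [← LowerSet.Iic_le, le_himp_iff, ← LowerSet.coe_subset_coe, LowerSet.coe_inf]
  simp only [Set.subset_def, Set.mem_inter_iff, SetLike.mem_coe, LowerSet.coe_Iic, Set.mem_Iic,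
    and_imp]

@[ext]
structure Zigzag (n : ℕ) where
  val : ℕ
  isLt : val < n

namespace Zigzag

variable {n : ℕ}

instance : PartialOrder (Zigzag n) where
  le x y := x = y ∨ x.val + 2 ≤ y.val
  le_refl x := .inl rfl
  le_trans x y z := by
    rintro (rfl | hxy) (rfl | hyz)
    exacts [.inl rfl, .inr hyz, .inr hxy, .inr (by omega)]
  le_antisymm x y := by
    rintro (h | hxy) (h' | hyx)
    exacts [h, h, h'.symm, absurd hxy (by omega)]

theorem le_iff {x y : Zigzag n} : x ≤ y ↔ x = y ∨ x.val + 2 ≤ y.val := Iff.rfl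

instance : Finite (Zigzag n) :=
  Finite.of_injective (fun x => (⟨x.val, x.isLt⟩ : Fin n)) fun x y h => by
    ext; exact congrArg Fin.val h

def initSeg (n j : ℕ) : LowerSet (Zigzag n) :=
  ⟨{x | x.val < j}, fun x y hyx (hx : x.val < j) => show y.val < j by
    rcases hyx with rfl | hyx <;> omega⟩

theorem mem_initSeg {j : ℕ} {x : Zigzag n} : x ∈ initSeg n j ↔ x.val < j := Iff.rfl

theorem initSeg_zero : initSeg n 0 = ⊥ :=
  SetLike.ext fun x => by simp [mem_initSeg]

theorem himp_initSeg_sup (j : ℕ) :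
    (initSeg n (j + 1) ⇨ initSeg n j) ⊔ initSeg n (j + 1) = initSeg n (j + 2) := by
  refine SetLike.ext fun x => ?_
  rw [LowerSet.mem_sup_iff, LowerSet.mem_himp_iff]
  simp only [mem_initSeg, le_iff]
  constructor
  · rintro (hx | hx)
    · by_contra! hjx
      have hj : j < n := by have := x.isLt; omega
      exact lt_irrefl j (hx (y := ⟨j, hj⟩) (.inr (by omega)) (by simp only; omega))
    · omega
  · intro hx
    by_cases hxj : x.val < j + 1
    · exact .inr hxj
    · left
      rintro y (rfl | hy) hyj <;> omega

theorem ladder_initSeg_one : ∀ k, HeytingAlgebra.ladder (initSeg n 1) k = initSeg n k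
  | 0 => initSeg_zero.symm
  | 1 => rfl
  | k + 2 => by
    rw [HeytingAlgebra.ladder, ladder_initSeg_one k, ladder_initSeg_one (k + 1), himp_initSeg_sup]

theorem initSeg_injOn : Set.InjOn (initSeg n) (Set.Iio (n + 1)) := by
  intro j hj k (hk : k < n + 1) h
  by_contra hne
  wlog hjk : j < k generalizing j k
  · exact this hk hj h.symm (Ne.symm hne) (by omega)
  exact lt_irrefl j ((SetLike.ext_iff.1 h ⟨j, by omega⟩).2 hjk)

end Zigzag

/-- One-generated finite Heyting algebras are of unbounded size: for every `n` there is a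
finite Heyting algebra with more than `n` elements generated by a single element. -/
theorem stmt_14 (n : ℕ) :
    ∃ (A : Type) (_ : HeytingAlgebra A) (_ : Fintype A) (a : A),
      (∀ S : Set A, IsHeytingSubalg S → a ∈ S → S = Set.univ) ∧
      n < Fintype.card A := by
  open HeytingAlgebra Zigzag in
  let : Fintype (Closure (initSeg n 1)) := Fintype.ofFinite _
  refine ⟨Closure (initSeg n 1), inferInstance, inferInstance, Closure.generator _,
    fun S hS ha => Closure.eq_univ_of_isHeytingSubalg hS ha, ?_⟩
  rw [Fintype.card_eq_nat_card, Nat.lt_iff_add_one_le]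
  apply Closure.le_natCard_of_injOn_ladder
  rw [funext ladder_initSeg_one]
  exact initSeg_injOn
end

section
/- If the age of a countable structure M has the strong amalgamation property and M is ultrahomogeneous, then the algebraic closure of any finite subset A of M equals the definable closure of A, which equals the substructure generated by A. -/
open FirstOrder

variable {L : FirstOrder.Language} {M : Type*} [L.Structure M]

/-- The definable closure of `A ⊆ M`: the elements fixed by all automorphisms fixing `A`
pointwise. -/
def dclSet (L : FirstOrder.Language) (M : Type*) [L.Structure M] (A : Set M) : Set M :=
  {m | ∀ g : M ≃[L] M, (∀ a ∈ A, g a = a) → g m = m}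

/-- The algebraic closure of `A ⊆ M`: the elements with finite orbit under the
automorphisms fixing `A` pointwise. -/
def aclSet (L : FirstOrder.Language) (M : Type*) [L.Structure M] (A : Set M) : Set M :=
  {m | {x : M | ∃ g : M ≃[L] M, (∀ a ∈ A, g a = a) ∧ g m = x}.Finite}

/-- `M` is ultrahomogeneous: every isomorphism between finitely generated substructures
of `M` extends to an automorphism of `M`. -/
def IsUltrahomogeneous (L : FirstOrder.Language) (M : Type*) [L.Structure M] : Prop :=
  ∀ (S T : L.Substructure M), S.FG → T.FG → ∀ e : S ≃[L] T,
    ∃ g : M ≃[L] M, ∀ x : S, g (x : M) = (e x : M)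

/-- The age of `M` has the strong amalgamation property, formulated inside `M`:
every lower amalgam of finitely generated substructures of `M` can be completed in `M`
so that the images of the two sides intersect exactly in the image of the base. -/
def AgeHasSAP (L : FirstOrder.Language) (M : Type*) [L.Structure M] : Prop :=
  ∀ (A₀ A₁ A₂ : L.Substructure M), A₀.FG → A₁.FG → A₂.FG →
    ∀ (h₁ : A₀ ≤ A₁) (h₂ : A₀ ≤ A₂),
    ∃ (g₁ : A₁ ↪[L] M) (g₂ : A₂ ↪[L] M),
      (∀ x : A₀, g₁ (FirstOrder.Language.Substructure.inclusion h₁ x) =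
        g₂ (FirstOrder.Language.Substructure.inclusion h₂ x)) ∧
      Set.range g₁ ∩ Set.range g₂ =
        (fun x : A₀ => g₁ (FirstOrder.Language.Substructure.inclusion h₁ x)) '' Set.univ

/-- If a countable structure `M` is ultrahomogeneous and its age has the strong
amalgamation property, then for every finite `A ⊆ M`, the algebraic closure of `A`
equals the definable closure of `A`, which equals the substructure generated by `A`. -/
theorem stmt_15 (L : FirstOrder.Language) (M : Type*) [L.Structure M] [Countable M]
    (hultra : IsUltrahomogeneous L M) (hsap : AgeHasSAP L M)
    (A : Set M) (hA : A.Finite) :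
    aclSet L M A = dclSet L M A ∧
      dclSet L M A = (FirstOrder.Language.Substructure.closure L A : Set M) := by
  classical
  -- closure ⊆ dcl
  have h1 : (Language.Substructure.closure L A : Set M) ⊆ dclSet L M A := by
    intro m hm g hg
    have hle : Language.Substructure.closure L A ≤
        Language.Hom.eqLocus g.toHom (Language.Hom.id L M) :=
      Language.Substructure.closure_le.2 (fun a ha => hg a ha)
    exact hle hm
  -- dcl ⊆ acl
  have h2 : dclSet L M A ⊆ aclSet L M A := by
    intro m hm
    apply Set.Finite.subset (Set.finite_singleton m)
    rintro x ⟨g, hg, rfl⟩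
    exact hm g hg
  -- acl ⊆ closure
  have h3 : aclSet L M A ⊆ (Language.Substructure.closure L A : Set M) := by
    intro m hm
    by_contra hmA
    set O : Set M := {x : M | ∃ g : M ≃[L] M, (∀ a ∈ A, g a = a) ∧ g m = x} with hOdef
    have hOfin : O.Finite := hm
    set A₀ := Language.Substructure.closure L A with hA₀
    set A₁ := Language.Substructure.closure L (A ∪ O) with hA₁
    set A₂ := Language.Substructure.closure L (A ∪ {m}) with hA₂
    have hA₀fg : A₀.FG := Language.Substructure.fg_closure hA
    have hA₁fg : A₁.FG := Language.Substructure.fg_closure (hA.union hOfin)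
    have hA₂fg : A₂.FG :=
      Language.Substructure.fg_closure (hA.union (Set.finite_singleton m))
    have h₁ : A₀ ≤ A₁ := Language.Substructure.closure_mono Set.subset_union_left
    have h₂ : A₀ ≤ A₂ := Language.Substructure.closure_mono Set.subset_union_left
    obtain ⟨g₁, g₂, hagree, hinter⟩ := hsap A₀ A₁ A₂ hA₀fg hA₁fg hA₂fg h₁ h₂
    -- extend g₁ to an automorphism σ
    have hr1 : (g₁.toHom.range).FG :=
      Language.Structure.FG.range ((A₁.fg_iff_structure_fg).1 hA₁fg) g₁.toHom
    obtain ⟨σ, hσ⟩ := hultra A₁ g₁.toHom.range hA₁fg hr1 g₁.equivRange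
    have hσ' : ∀ x : A₁, σ (x : M) = g₁ x := by
      intro x; rw [hσ x, Language.Embedding.equivRange_apply]
    -- the composite embedding of A₂
    set e2 : A₂ ↪[L] M := σ.symm.toEmbedding.comp g₂ with he2
    have hr2 : (e2.toHom.range).FG :=
      Language.Structure.FG.range ((A₂.fg_iff_structure_fg).1 hA₂fg) e2.toHom
    obtain ⟨τ, hτ⟩ := hultra A₂ e2.toHom.range hA₂fg hr2 e2.equivRange
    have hτ' : ∀ x : A₂, τ (x : M) = σ.symm (g₂ x) := by
      intro x; rw [hτ x, Language.Embedding.equivRange_apply]; rfl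
    -- τ fixes A pointwise
    have hmemA₂ : ∀ a ∈ A, a ∈ A₂ := fun a ha =>
      Language.Substructure.subset_closure (Set.mem_union_left _ ha)
    have hmemA₀ : ∀ a ∈ A, a ∈ A₀ := fun a ha => Language.Substructure.subset_closure ha
    have hfix : ∀ a ∈ A, τ a = a := by
      intro a ha
      have h4 : τ a = σ.symm (g₂ ⟨a, hmemA₂ a ha⟩) := hτ' ⟨a, hmemA₂ a ha⟩
      have h5 : (⟨a, hmemA₂ a ha⟩ : A₂) =
          Language.Substructure.inclusion h₂ ⟨a, hmemA₀ a ha⟩ := rfl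
      rw [h4, h5, ← hagree ⟨a, hmemA₀ a ha⟩]
      have h6 := hσ' (Language.Substructure.inclusion h₁ ⟨a, hmemA₀ a ha⟩)
      rw [← h6, Language.Equiv.symm_apply_apply]
      rfl
    have hmA₂ : m ∈ A₂ := Language.Substructure.subset_closure
      (Set.mem_union_right _ (Set.mem_singleton m))
    -- τ m is in the orbit O
    have hτmO : τ m ∈ O := ⟨τ, hfix, rfl⟩
    -- but τ m ∉ A₁ ⊇ O
    have hOsub : O ⊆ (A₁ : Set M) := fun x hx =>
      Language.Substructure.subset_closure (Set.mem_union_right _ hx)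
    have hτmA₁ : τ (m : M) ∉ (A₁ : Set M) := by
      intro hmem
      rw [hτ' ⟨m, hmA₂⟩] at hmem
      have h7 : g₂ ⟨m, hmA₂⟩ = g₁ ⟨σ.symm (g₂ ⟨m, hmA₂⟩), hmem⟩ := by
        rw [← hσ' ⟨σ.symm (g₂ ⟨m, hmA₂⟩), hmem⟩, Language.Equiv.apply_symm_apply]
      have h8 : g₂ ⟨m, hmA₂⟩ ∈ Set.range g₁ ∩ Set.range g₂ :=
        ⟨⟨_, h7.symm⟩, ⟨_, rfl⟩⟩
      rw [hinter] at h8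
      obtain ⟨x, -, hx⟩ := h8
      have hx : g₂ (Language.Substructure.inclusion h₂ x) = g₂ ⟨m, hmA₂⟩ :=
        (hagree x).symm.trans hx
      have h9 : Language.Substructure.inclusion h₂ x = ⟨m, hmA₂⟩ := g₂.injective hx
      have h10 : (x : M) = m := congrArg Subtype.val h9
      exact hmA (h10 ▸ x.2)
    exact hτmA₁ (hOsub hτmO)
  refine ⟨Set.Subset.antisymm (h3.trans h1) h2, Set.Subset.antisymm (h2.trans h3) h1⟩
end
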